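/- Euler–Maclaurin first-order form: if f ∈ C¹[X, Y] with X < Y reals, then ∑_{X < n ≤ Y} f(n) = ∫_X^Y f(t) dt − ψ(Y)·f(Y) + ψ(X)·f(X) + ∫_X^Y ψ(t)·f'(t) dt, where ψ(t) = t − ⌊t⌋ − 1/2. -/

import Mathlib

/-!
On a piece `[a, b]` of a unit cell `[m, m + 1]` the floor is `m` except at the right endpoint, so
`∫ ⌊t⌋ f'(t) dt = m (f b - f a)` there. Chaining the cells, each integer `n` crossed contributes the
jump `f n` of `⌊t⌋ f(t)`, which gives `∑_{a < n ≤ b} f n = ⌊b⌋ f b - ⌊a⌋ f a - ∫_a^b ⌊t⌋ f'(t) dt`.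
The remaining part `t - 1/2` of `ψ` is an ordinary integration by parts.
-/

open Real

noncomputable def psi (t : ℝ) : ℝ := t - ⌊t⌋ - 1 / 2

open MeasureTheory Set intervalIntegral

section

variable {E : Type*} [NormedAddCommGroup E] [NormedSpace ℝ E]
  {f f' : ℝ → E} {a b : ℝ}

lemma intervalIntegrable_floor_smul {g : ℝ → E} (hg : ContinuousOn g (uIcc a b)) :
    IntervalIntegrable (fun t => (⌊t⌋ : ℝ) • g t) volume a b :=
  (Int.cast_mono.comp Int.floor_mono).intervalIntegrable.smul_continuousOn hg

variable [CompleteSpace E]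

lemma integral_floor_smul_eq_of_le_of_le {m : ℤ} (hma : (m : ℝ) ≤ a) (hab : a ≤ b)
    (hbm : b ≤ m + 1) (hderiv : ∀ t ∈ Icc a b, HasDerivAt f (f' t) t)
    (hint : IntervalIntegrable f' volume a b) :
    ∫ t in a..b, (⌊t⌋ : ℝ) • f' t = (m : ℝ) • (f b - f a) := by
  have hfloor : EqOn (fun t => (⌊t⌋ : ℝ) • f' t) (fun t => (m : ℝ) • f' t) (uIoo a b) := by
    intro t ht
    rw [uIoo_of_le hab] at ht
    simp only [Int.floor_eq_iff.2 ⟨hma.trans ht.1.le, ht.2.trans_le hbm⟩]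
  rw [integral_congr_uIoo hfloor, intervalIntegral.integral_smul,
    integral_eq_sub_of_hasDerivAt (fun t ht => hderiv t (uIcc_of_le hab ▸ ht)) hint]

theorem sum_Ioc_floor_eq_sub_integral_floor_smul (hab : a ≤ b)
    (hderiv : ∀ t ∈ Icc a b, HasDerivAt f (f' t) t) (hcont : ContinuousOn f' (Icc a b)) :
    ∑ n ∈ Finset.Ioc ⌊a⌋ ⌊b⌋, f n =
      (⌊b⌋ : ℝ) • f b - (⌊a⌋ : ℝ) • f a - ∫ t in a..b, (⌊t⌋ : ℝ) • f' t := by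
  obtain ⟨k, hk⟩ := Int.exists_add_of_le (Int.floor_mono hab)
  induction k generalizing a with
  | zero =>
    have hfloor : ⌊b⌋ = ⌊a⌋ := by simpa using hk
    rw [hfloor, Finset.Ioc_self, Finset.sum_empty,
      integral_floor_smul_eq_of_le_of_le (Int.floor_le a) hab
        (by simpa [hfloor] using (Int.lt_floor_add_one b).le) hderiv
        (hcont.intervalIntegrable_of_Icc hab), smul_sub, sub_self]
  | succ k ih =>
    set c : ℝ := ((⌊a⌋ + 1 : ℤ) : ℝ) with hc
    have hfc : ⌊c⌋ = ⌊a⌋ + 1 := Int.floor_intCast _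
    have hac : a ≤ c := by rw [hc]; push_cast; exact (Int.lt_floor_add_one a).le
    have hcb : c ≤ b := (Int.cast_le.2 (by omega : ⌊a⌋ + 1 ≤ ⌊b⌋)).trans (Int.floor_le b)
    have hcont_ac : ContinuousOn f' (Icc a c) := hcont.mono (Icc_subset_Icc_right hcb)
    have hcont_cb : ContinuousOn f' (Icc c b) := hcont.mono (Icc_subset_Icc_left hac)
    have hright := ih hcb (fun t ht => hderiv t ⟨hac.trans ht.1, ht.2⟩) hcont_cb
      (by rw [hfc]; omega)
    have hleft := integral_floor_smul_eq_of_le_of_le (m := ⌊a⌋) (Int.floor_le a) hac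
      (by rw [hc]; push_cast; rfl) (fun t ht => hderiv t ⟨ht.1, ht.2.trans hcb⟩)
      (hcont_ac.intervalIntegrable_of_Icc hac)
    rw [← integral_add_adjacent_intervals
        (intervalIntegrable_floor_smul (hcont_ac.mono (uIcc_of_le hac).le))
        (intervalIntegrable_floor_smul (hcont_cb.mono (uIcc_of_le hcb).le)),
      ← Finset.insert_Ioc_add_one_left_eq_Ioc (by omega), Finset.sum_insert (by simp),
      ← hfc, hright, hleft, hfc]
    module

theorem sum_Ioc_floor_eq_integral_add_integral_psi_smul (hab : a ≤ b)
    (hderiv : ∀ t ∈ Icc a b, HasDerivAt f (f' t) t) (hcont : ContinuousOn f' (Icc a b)) :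
    ∑ n ∈ Finset.Ioc ⌊a⌋ ⌊b⌋, f n =
      (∫ t in a..b, f t) - psi b • f b + psi a • f a + ∫ t in a..b, psi t • f' t := by
  have hderiv' : ∀ t ∈ uIcc a b, HasDerivAt f (f' t) t :=
    fun t ht => hderiv t (uIcc_of_le hab ▸ ht)
  have hcont' : ContinuousOn f' (uIcc a b) := uIcc_of_le hab ▸ hcont
  have hparts : ∫ t in a..b, (t - 1 / 2) • f' t =
      (b - 1 / 2) • f b - (a - 1 / 2) • f a - ∫ t in a..b, f t := by
    simpa only [one_smul] using integral_smul_deriv_eq_deriv_smul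
      (fun t _ => (hasDerivAt_id' t).sub_const (1 / 2)) hderiv' intervalIntegrable_const
      hcont'.intervalIntegrable
  have hsplit : ∫ t in a..b, psi t • f' t =
      (∫ t in a..b, (t - 1 / 2) • f' t) - ∫ t in a..b, (⌊t⌋ : ℝ) • f' t := by
    rw [← integral_sub (hcont'.intervalIntegrable.continuousOn_smul (by fun_prop))
      (intervalIntegrable_floor_smul hcont')]
    congr with t
    rw [psi, ← sub_smul]
    ring_nf
  rw [sum_Ioc_floor_eq_sub_integral_floor_smul hab hderiv hcont, hsplit, hparts, psi, psi]
  module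

end

theorem euler_maclaurin (X Y : ℝ) (hXY : X < Y)
    (f f' : ℝ → ℝ)
    (hderiv : ∀ t ∈ Set.Icc X Y, HasDerivAt f (f' t) t)
    (hcont : ContinuousOn f' (Set.Icc X Y)) :
    ∑ n ∈ Finset.Ioc ⌊X⌋ ⌊Y⌋, f n =
      (∫ t in X..Y, f t) - psi Y * f Y + psi X * f X +
        ∫ t in X..Y, psi t * f' t :=
  sum_Ioc_floor_eq_integral_add_integral_psi_smul hXY.le hderiv hcont
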